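/- Let G be a network with request R and extended graph G_ext. Let Ŝ ⊆ S and let f : E_ext → ℕ satisfy the connectivity inequalities f(δ⁺_{E_R}(W)) ≥ 1 for every W ⊆ V_G with W∩Ŝ ≠ ∅. Let u ∈ V_G and (u,w) ∈ E_ext with f(u,w) ≥ 1, and suppose there exists a directed path from u to the super sink o⁻_r in the support graph G^f_ext that does not use the edge (u,w). Then the flow f' that agrees with f except f'(u,w) = f(u,w) − 1 again satisfies the connectivity inequalities: f'(δ⁺_{E_R}(W)) ≥ 1 for every W ⊆ V_G with W∩Ŝ ≠ ∅. -/

import Mathlib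

/-! Formalization of the Constrained Virtual Steiner Arborescence Problem (CVSAP),
its single-commodity flow IP formulation, and related notions. -/

/-- Vertices of the extended graph: original vertices plus super source `src`,
super sink `sinkS` for Steiner nodes and super sink `sinkR` for the root. -/
inductive ExtV (V : Type) where
  | orig : V → ExtV V
  | src : ExtV V
  | sinkS : ExtV V
  | sinkR : ExtV V
deriving DecidableEq

open ExtV

/-- A (finite) capacitated directed network. -/
structure Network (V : Type) [DecidableEq V] where
  E : Finset (V × V)
  uE : V × V → ℕ
  cE : V × V → ℝ

/-- A request `R = (root, S, T, u_r, c_S, u_S)`. -/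
structure Request (V : Type) [DecidableEq V] where
  root : V
  S : Finset V
  T : Finset V
  ur : ℕ
  cS : V → ℝ
  uS : V → ℕ

variable {V : Type} [DecidableEq V]

/-- Well-formedness: root is neither terminal nor Steiner site, Steiner sites and terminals
are disjoint, and all costs are positive. -/
def RequestWF (N : Network V) (R : Request V) : Prop :=
  R.root ∉ R.T ∧ R.root ∉ R.S ∧ Disjoint R.S R.T ∧
    (∀ s ∈ R.S, 0 < R.cS s) ∧ (∀ e ∈ N.E, 0 < N.cE e)

/-- Edge set of the extended graph `G_ext`. -/
def Eext (N : Network V) (R : Request V) : Finset (ExtV V × ExtV V) :=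
  (N.E.image fun e => (orig e.1, orig e.2)) ∪
    ({(orig R.root, sinkR)} : Finset (ExtV V × ExtV V)) ∪
    (R.S.image fun s => (orig s, sinkS)) ∪
    (R.S.image fun s => (src, orig s)) ∪
    (R.T.image fun t => (src, orig t))

/-- `E_R`: the extended edges without the edges into the Steiner super sink. -/
def ERext (N : Network V) (R : Request V) : Finset (ExtV V × ExtV V) :=
  (Eext N R).filter fun e => e.2 ≠ sinkS

/-- Edges of `F` leaving node `v`. -/
def outV (F : Finset (ExtV V × ExtV V)) (v : ExtV V) : Finset (ExtV V × ExtV V) :=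
  F.filter fun e => e.1 = v

/-- Edges of `F` entering node `v`. -/
def inV (F : Finset (ExtV V × ExtV V)) (v : ExtV V) : Finset (ExtV V × ExtV V) :=
  F.filter fun e => e.2 = v

/-- Edges of `F` leaving the node set `W`. -/
def outSet (F : Finset (ExtV V × ExtV V)) (W : Finset (ExtV V)) : Finset (ExtV V × ExtV V) :=
  F.filter fun e => e.1 ∈ W ∧ e.2 ∉ W

/-- Total flow of `f` on the edge set `F`. -/
def fSum (f : ExtV V × ExtV V → ℕ) (F : Finset (ExtV V × ExtV V)) : ℕ :=
  ∑ e ∈ F, f e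

/-- Embedding of a set of original nodes into the extended graph. -/
def extW (W : Finset V) : Finset (ExtV V) := W.image orig

/-- A walk in the support graph `G^f_ext`: consecutive nodes are joined by extended
edges carrying positive flow. -/
def IsSupportWalk (N : Network V) (R : Request V) (f : ExtV V × ExtV V → ℕ)
    (p : List (ExtV V)) : Prop :=
  p.Chain' fun a b => (a, b) ∈ Eext N R ∧ 1 ≤ f (a, b)

/-- (IP-1): flow conservation at all original nodes. -/
def IP1 (N : Network V) (R : Request V) (f : ExtV V × ExtV V → ℕ) : Prop :=
  ∀ v : V, fSum f (outV (Eext N R) (orig v)) = fSum f (inV (Eext N R) (orig v))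

/-- (IP-2): connectivity inequalities for activated Steiner sites. -/
def IP2 (N : Network V) (R : Request V) (x : V → ℕ) (f : ExtV V × ExtV V → ℕ) : Prop :=
  ∀ W : Finset V, ∀ s ∈ W, s ∈ R.S → x s ≤ fSum f (outSet (ERext N R) (extW W))

/-- (IP-3): directed Steiner cuts for terminals. -/
def IP3 (N : Network V) (R : Request V) (f : ExtV V × ExtV V → ℕ) : Prop :=
  ∀ W : Finset V, (W ∩ R.T).Nonempty → 1 ≤ fSum f (outSet (ERext N R) (extW W))

/-- Feasibility for the integer program IP-A-CVSAP. -/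
def IPFeasible (N : Network V) (R : Request V) (x : V → ℕ) (f : ExtV V × ExtV V → ℕ) : Prop :=
  (∀ s ∈ R.S, x s ≤ 1) ∧
  IP1 N R f ∧
  IP2 N R x f ∧
  IP3 N R f ∧
  (∀ s ∈ R.S, x s ≤ f (orig s, sinkS)) ∧
  (∀ s ∈ R.S, f (orig s, sinkS) ≤ R.uS s * x s) ∧
  f (orig R.root, sinkR) ≤ R.ur ∧
  (∀ e ∈ N.E, f (orig e.1, orig e.2) ≤ N.uE e) ∧
  (∀ t ∈ R.T, f (src, orig t) = 1) ∧
  (∀ s ∈ R.S, f (src, orig s) = x s)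

/-- Objective value of IP-A-CVSAP. -/
noncomputable def costIP (N : Network V) (R : Request V) (x : V → ℕ)
    (f : ExtV V × ExtV V → ℕ) : ℝ :=
  ∑ e ∈ N.E, N.cE e * f (orig e.1, orig e.2) + ∑ s ∈ R.S, R.cS s * x s

/-- A Virtual Arborescence: nodes, virtual edges and the mapping of virtual edges
onto paths in the underlying graph. -/
structure VirtArb (V : Type) where
  VT : Finset V
  ET : Finset (V × V)
  pi : V × V → List V

/-- `p` is a simple directed path in `N` from `u` to `v`. -/
def IsPathInG (N : Network V) (p : List V) (u v : V) : Prop :=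
  p.Chain' (fun a b => (a, b) ∈ N.E) ∧ p.head? = some u ∧ p.getLast? = some v ∧ p.Nodup

/-- The virtual edges whose path uses the edge `e` of the underlying graph. -/
def pathUses (TA : VirtArb V) (e : V × V) : Finset (V × V) :=
  TA.ET.filter fun d => e ∈ (TA.pi d).zip (TA.pi d).tail

/-- `|π(E_T)[e]|`: the number of paths of the virtual arborescence using edge `e`. -/
def pathCount (TA : VirtArb V) (e : V × V) : ℕ := (pathUses TA e).card

/-- Total degree of node `v` with respect to the virtual edge set `ET`. -/
def degTotal (ET : Finset (V × V)) (v : V) : ℕ :=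
  (ET.filter fun e => e.1 = v).card + (ET.filter fun e => e.2 = v).card

/-- `(VT, ET, r)` is an arborescence rooted at `r` with all edges oriented towards `r`. -/
def ArborTowards (VT : Finset V) (ET : Finset (V × V)) (r : V) : Prop :=
  (∀ e ∈ ET, e.1 ∈ VT ∧ e.2 ∈ VT ∧ e.1 ≠ e.2) ∧
  (∀ v ∈ VT, v ≠ r → (ET.filter fun e => e.1 = v).card = 1) ∧
  (∀ e ∈ ET, e.1 ≠ r) ∧
  (∀ v ∈ VT, ∃ p : List V, p.Chain' (fun a b => (a, b) ∈ ET) ∧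
      p.head? = some v ∧ p.getLast? = some r)

/-- `(VT, ET, r)` is an arborescence rooted at `r` with all edges oriented away from `r`. -/
def ArborAway (VT : Finset V) (ET : Finset (V × V)) (r : V) : Prop :=
  (∀ e ∈ ET, e.1 ∈ VT ∧ e.2 ∈ VT ∧ e.1 ≠ e.2) ∧
  (∀ v ∈ VT, v ≠ r → (ET.filter fun e => e.2 = v).card = 1) ∧
  (∀ e ∈ ET, e.2 ≠ r) ∧
  (∀ v ∈ VT, ∃ p : List V, p.Chain' (fun a b => (a, b) ∈ ET) ∧
      p.head? = some r ∧ p.getLast? = some v)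

/-- Feasible solutions of A-CVSAP: all arborescence edges oriented towards the root. -/
def FeasibleACVSAP (N : Network V) (R : Request V) (TA : VirtArb V) : Prop :=
  R.root ∈ TA.VT ∧
  ArborTowards TA.VT TA.ET R.root ∧
  (∀ d ∈ TA.ET, IsPathInG N (TA.pi d) d.1 d.2) ∧
  R.T ⊆ TA.VT ∧
  TA.VT ⊆ insert R.root (R.S ∪ R.T) ∧
  (∀ t ∈ R.T, degTotal TA.ET t = 1) ∧
  degTotal TA.ET R.root ≤ R.ur ∧
  (∀ s ∈ R.S, s ∈ TA.VT → degTotal TA.ET s ≤ R.uS s + 1) ∧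
  (∀ e ∈ N.E, pathCount TA e ≤ N.uE e)

/-- Feasible solutions of M-CVSAP: all arborescence edges oriented away from the root. -/
def FeasibleMCVSAP (N : Network V) (R : Request V) (TA : VirtArb V) : Prop :=
  R.root ∈ TA.VT ∧
  ArborAway TA.VT TA.ET R.root ∧
  (∀ d ∈ TA.ET, IsPathInG N (TA.pi d) d.1 d.2) ∧
  R.T ⊆ TA.VT ∧
  TA.VT ⊆ insert R.root (R.S ∪ R.T) ∧
  (∀ t ∈ R.T, degTotal TA.ET t = 1) ∧
  degTotal TA.ET R.root ≤ R.ur ∧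
  (∀ s ∈ R.S, s ∈ TA.VT → degTotal TA.ET s ≤ R.uS s + 1) ∧
  (∀ e ∈ N.E, pathCount TA e ≤ N.uE e)

/-- Cost of a virtual arborescence. -/
noncomputable def costCVSAP (N : Network V) (R : Request V) (TA : VirtArb V) : ℝ :=
  ∑ e ∈ N.E, N.cE e * pathCount TA e + ∑ s ∈ R.S.filter (· ∈ TA.VT), R.cS s

/-!
A flow-carrying walk from `u` to `o⁻_r` that starts inside `W` must at some step leave
`W ∪ {o⁻_S}`. The super sink `o⁻_S` has no outgoing edges, so that step is an edge of
`δ⁺_{E_R}(W)`; it carries positive flow and, since the walk avoids `(u, w)`, it keeps this flow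
in `f'`. If `(u, w)` does not cross the cut `W` at all, the cut value does not change.
-/

namespace List

variable {α : Type*}

theorem exists_mem_zip_tail_of_head?_of_getLast? (P : α → Prop) :
    ∀ {p : List α} {x y : α}, p.head? = some x → p.getLast? = some y → P x → ¬ P y →
      ∃ a b, (a, b) ∈ p.zip p.tail ∧ P a ∧ ¬ P b
  | [], _, _, hx, _, _, _ => by simp at hx
  | [c], _, _, hx, hy, hPx, hPy => by
    simp only [head?_cons, getLast?_singleton, Option.some.injEq] at hx hy
    subst hx hy
    exact absurd hPx hPy
  | c :: b :: q, x, y, hx, hy, hPx, hPy => by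
    simp only [head?_cons, Option.some.injEq] at hx
    subst hx
    by_cases hPb : P b
    · obtain ⟨a', b', hmem, hPa', hPb'⟩ := exists_mem_zip_tail_of_head?_of_getLast? P
        (p := b :: q) rfl (by rwa [getLast?_cons_cons] at hy) hPb hPy
      exact ⟨a', b', mem_cons_of_mem _ hmem, hPa', hPb'⟩
    · exact ⟨c, b, by simp, hPx, hPb⟩

theorem IsChain.rel_of_mem_zip_tail {R : α → α → Prop} :
    ∀ {p : List α}, p.IsChain R → ∀ {a b : α}, (a, b) ∈ p.zip p.tail → R a b
  | [], _, _, _, h => by simp at h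
  | [_], _, _, _, h => by simp at h
  | c :: d :: q, hp, a, b, h => by
    rw [isChain_cons_cons] at hp
    rcases mem_cons.mp (show (a, b) ∈ (c, d) :: (d :: q).zip q by simpa using h) with h | h
    · cases h
      exact hp.1
    · exact hp.2.rel_of_mem_zip_tail h

end List

theorem fst_ne_sinkS_of_mem_Eext {N : Network V} {R : Request V}
    {e : ExtV V × ExtV V} (he : e ∈ Eext N R) : e.1 ≠ sinkS := by
  simp only [Eext, Finset.mem_union, Finset.mem_image, Finset.mem_singleton] at he
  rcases he with (((⟨_, _, rfl⟩ | rfl) | ⟨_, _, rfl⟩) | ⟨_, _, rfl⟩) | ⟨_, _, rfl⟩ <;>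
    simp

theorem IsSupportWalk.exists_mem_outSet {N : Network V} {R : Request V}
    {f : ExtV V × ExtV V → ℕ} {p : List (ExtV V)} (hp : IsSupportWalk N R f p) {u : V}
    (hph : p.head? = some (orig u)) (hpl : p.getLast? = some sinkR) {W : Finset V}
    (hu : u ∈ W) :
    ∃ e ∈ p.zip p.tail, e ∈ outSet (ERext N R) (extW W) ∧ 1 ≤ f e := by
  obtain ⟨a, b, hab, ha, hb⟩ := List.exists_mem_zip_tail_of_head?_of_getLast?
    (fun v => v ∈ extW W ∨ v = sinkS) hph hpl (Or.inl (Finset.mem_image_of_mem _ hu))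
    (by simp [extW])
  obtain ⟨hE, hf⟩ := List.IsChain.rel_of_mem_zip_tail hp hab
  obtain ⟨hbW, hbS⟩ := not_or.mp hb
  have haW : a ∈ extW W := ha.resolve_right (fst_ne_sinkS_of_mem_Eext hE)
  exact ⟨(a, b), hab, Finset.mem_filter.mpr ⟨Finset.mem_filter.mpr ⟨hE, hbS⟩, haW, hbW⟩, hf⟩

theorem connectivity_preserved_general (N : Network V) (R : Request V)
    (Shat : Finset V)
    (f : ExtV V × ExtV V → ℕ)
    (hconn : ∀ W : Finset V, (W ∩ Shat).Nonempty →
      1 ≤ fSum f (outSet (ERext N R) (extW W)))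
    (u : V) (w : ExtV V)
    (p : List (ExtV V)) (hp : IsSupportWalk N R f p)
    (hph : p.head? = some (ExtV.orig u)) (hpl : p.getLast? = some ExtV.sinkR)
    (hpavoid : (ExtV.orig u, w) ∉ p.zip p.tail) :
    ∀ W : Finset V, (W ∩ Shat).Nonempty →
      1 ≤ fSum (Function.update f (ExtV.orig u, w) (f (ExtV.orig u, w) - 1))
        (outSet (ERext N R) (extW W)) := by
  intro W hW
  by_cases hcut : (ExtV.orig u, w) ∈ outSet (ERext N R) (extW W)
  · have hu : u ∈ W := by simpa [outSet, extW] using (Finset.mem_filter.mp hcut).2.1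
    obtain ⟨e, hep, he, hfe⟩ := hp.exists_mem_outSet hph hpl hu
    have hne : e ≠ (ExtV.orig u, w) := by
      rintro rfl
      exact hpavoid hep
    calc 1 ≤ f e := hfe
      _ = Function.update f (ExtV.orig u, w) (f (ExtV.orig u, w) - 1) e :=
          (Function.update_of_ne hne _ f).symm
      _ ≤ _ := Finset.single_le_sum (fun _ _ => Nat.zero_le _) he
  · rw [fSum, Finset.sum_update_of_notMem hcut]
    exact hconn W hW

theorem connectivity_preserved [Fintype V] (N : Network V) (R : Request V)
    (hWF : RequestWF N R) (Shat : Finset V) (hShat : Shat ⊆ R.S)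
    (f : ExtV V × ExtV V → ℕ)
    (hconn : ∀ W : Finset V, (W ∩ Shat).Nonempty →
      1 ≤ fSum f (outSet (ERext N R) (extW W)))
    (u : V) (w : ExtV V) (huw : (ExtV.orig u, w) ∈ Eext N R)
    (hf : 1 ≤ f (ExtV.orig u, w))
    (p : List (ExtV V)) (hp : IsSupportWalk N R f p)
    (hph : p.head? = some (ExtV.orig u)) (hpl : p.getLast? = some ExtV.sinkR)
    (hpavoid : (ExtV.orig u, w) ∉ p.zip p.tail) :
    ∀ W : Finset V, (W ∩ Shat).Nonempty →
      1 ≤ fSum (Function.update f (ExtV.orig u, w) (f (ExtV.orig u, w) - 1))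
        (outSet (ERext N R) (extW W)) :=
  connectivity_preserved_general N R Shat f hconn u w p hp hph hpl hpavoid
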